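/- arXiv:1107.3042 — 2 statements merged into one kernel-verified Lean document; each statement's English description precedes it below -/
import Mathlib

section
/- Let x_n, y_n, x, y ∈ Λ with Q_{x_n} → Q_x and Q_{y_n} → Q_y in the strong operator topology, and suppose for each n the projections Q_{x_n} and Q_{y_n} commute. Then Q_x and Q_y commute and Q_{x_n ∧ y_n} → Q_{x ∧ y} strongly. -/
open MeasureTheory Filter Topology

set_option synthInstance.maxHeartbeats 400000
noncomputable section

variable {Ω : Type*}

/-- The trivial σ-field augmented with all null sets: the least element `0` of `Λ`. -/
def nullSF {m0 : MeasurableSpace Ω} (μ : Measure Ω) : MeasurableSpace Ω :=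
  MeasurableSpace.generateFrom {s : Set Ω | μ s = 0}

/-- Membership in `Λ`: a sub-σ-field of `m0` containing all null sets. -/
def InLam {m0 : MeasurableSpace Ω} (μ : Measure Ω) (m : MeasurableSpace Ω) : Prop :=
  m ≤ m0 ∧ nullSF μ ≤ m

set_option synthInstance.maxHeartbeats 400000 in
/-- The type `L₂` subspace `L₂(m)` of `H = L₂(Ω, F, P)`. -/
abbrev L2S {m0 : MeasurableSpace Ω} (μ : Measure Ω) (m : MeasurableSpace Ω) :
    Submodule ℝ (Lp ℝ 2 μ) :=
  @lpMeas Ω ℝ ℝ _ _ _ m m0 2 μ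

/-- The orthogonal projection of `H = L₂(Ω, F, P)` onto `L₂(m)`. -/
def Q {m0 : MeasurableSpace Ω} (μ : Measure Ω) (m : MeasurableSpace Ω) :
    Lp ℝ 2 μ →L[ℝ] Lp ℝ 2 μ :=
  letI := Classical.dec (m ≤ m0)
  if hm : m ≤ m0 then
    haveI : Fact (m ≤ m0) := ⟨hm⟩
    (L2S μ m).subtypeL.comp (Submodule.orthogonalProjectionOnto (L2S μ m))
  else 0

/-- Strong operator convergence of the projections `Q (x n)` to `Q l`. -/
def SOTLim {m0 : MeasurableSpace Ω} (μ : Measure Ω) (x : ℕ → MeasurableSpace Ω)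
    (l : MeasurableSpace Ω) : Prop :=
  ∀ f : Lp ℝ 2 μ, Tendsto (fun n => Q μ (x n) f) atTop (𝓝 (Q μ l f))

/-!
Commuting orthogonal projections multiply to the projection onto the intersection of their
ranges, and `L₂(x) ∩ L₂(y) = L₂(x ∧ y)` because the σ-fields contain the null sets: an
`x`-measurable representative that is a.e. equal to a `y`-measurable one is itself
`y`-measurable. Since projections are contractions, strong convergence passes to products,
so `Q_{x_n} Q_{y_n} → Q_x Q_y` and `Q_{y_n} Q_{x_n} → Q_y Q_x` strongly; the two sequences
agree, hence so do the limits, and `Q_{x_n ∧ y_n} = Q_{x_n} Q_{y_n} → Q_x Q_y = Q_{x ∧ y}`.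
-/

theorem Filter.Tendsto.apply_of_norm_le {𝕜 E F ι : Type*} [NontriviallyNormedField 𝕜]
    [SeminormedAddCommGroup E] [SeminormedAddCommGroup F] [NormedSpace 𝕜 E] [NormedSpace 𝕜 F]
    {l : Filter ι} {T : ι → E →L[𝕜] F} {S : E →L[𝕜] F} {u : ι → E} {v : E} {C : ℝ}
    (hu : Tendsto u l (𝓝 v)) (hT : ∀ w, Tendsto (fun i => T i w) l (𝓝 (S w)))
    (hC : ∀ i, ‖T i‖ ≤ C) :
    Tendsto (fun i => T i (u i)) l (𝓝 (S v)) := by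
  rw [tendsto_iff_norm_sub_tendsto_zero] at hu ⊢
  have hTv := tendsto_iff_norm_sub_tendsto_zero.mp (hT v)
  have hbound : ∀ i, ‖T i (u i) - S v‖ ≤ C * ‖u i - v‖ + ‖T i v - S v‖ := fun i =>
    calc ‖T i (u i) - S v‖ = ‖T i (u i - v) + (T i v - S v)‖ := by rw [map_sub]; abel_nf
      _ ≤ ‖T i (u i - v)‖ + ‖T i v - S v‖ := norm_add_le _ _
      _ ≤ C * ‖u i - v‖ + ‖T i v - S v‖ := by
        gcongr; exact (T i).le_of_opNorm_le (hC i) _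
  refine squeeze_zero (fun _ => norm_nonneg _) hbound ?_
  simpa using (hu.const_mul C).add hTv

theorem Submodule.starProjection_comp_starProjection_eq_inf {𝕜 E : Type*} [RCLike 𝕜]
    [NormedAddCommGroup E] [InnerProductSpace 𝕜 E] [CompleteSpace E] {K L M : Submodule 𝕜 E}
    [K.HasOrthogonalProjection] [L.HasOrthogonalProjection] [M.HasOrthogonalProjection]
    (hM : M = K ⊓ L) (h : Commute K.starProjection L.starProjection) :
    K.starProjection ∘L L.starProjection = M.starProjection := by
  subst hM
  refine ContinuousLinearMap.IsStarProjection.ext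
    (isStarProjection_starProjection.mul isStarProjection_starProjection h)
    isStarProjection_starProjection ?_
  rw [range_starProjection]
  refine le_antisymm ?_ fun v hv => ⟨v, ?_⟩
  · rintro _ ⟨w, rfl⟩
    refine ⟨starProjection_apply_mem K _, ?_⟩
    rw [← ContinuousLinearMap.mul_def, h.eq]
    exact starProjection_apply_mem L _
  · simp [starProjection_eq_self_iff.mpr hv.1, starProjection_eq_self_iff.mpr hv.2]

section Lambda

variable {m0 : MeasurableSpace Ω} {μ : Measure Ω}

theorem Measurable.of_ae_eq_of_nullSF_le {β : Type*} [MeasurableSpace β] {m : MeasurableSpace Ω}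
    (hm : nullSF μ ≤ m) {f g : Ω → β} (hf : Measurable[m] f) (hfg : f =ᵐ[μ] g) :
    Measurable[m] g := by
  intro s hs
  set N := {ω | f ω ≠ g ω}
  have hN : μ N = 0 := ae_iff.mp hfg
  have hnull : ∀ t ⊆ N, MeasurableSet[m] t := fun t ht =>
    hm _ (MeasurableSpace.measurableSet_generateFrom (measure_mono_null ht hN))
  have hsplit : g ⁻¹' s = (f ⁻¹' s \ N) ∪ (g ⁻¹' s ∩ N) := by
    ext ω
    by_cases hω : ω ∈ N
    · simp [hω]
    · simp [hω, show f ω = g ω from not_not.mp hω]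
  rw [hsplit]
  exact ((hf hs).diff (hnull N subset_rfl)).union (hnull _ Set.inter_subset_right)

theorem L2S_inf {m1 m2 : MeasurableSpace Ω} (h2 : nullSF μ ≤ m2) :
    L2S μ (m1 ⊓ m2) = L2S μ m1 ⊓ L2S μ m2 := by
  ext f
  simp only [Submodule.mem_inf, mem_lpMeas_iff_aestronglyMeasurable]
  refine ⟨fun hf => ⟨hf.mono (inf_le_left (b := m2)), hf.mono (inf_le_right (a := m1))⟩, ?_⟩
  rintro ⟨⟨g1, hg1, hfg1⟩, ⟨g2, hg2, hfg2⟩⟩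
  have hg1m2 : Measurable[m2] g1 :=
    hg2.measurable.of_ae_eq_of_nullSF_le h2 (hfg2.symm.trans hfg1)
  exact ⟨g1, Measurable.stronglyMeasurable fun s hs =>
    MeasurableSpace.measurableSet_inf.mpr ⟨hg1.measurable hs, hg1m2 hs⟩, hfg1⟩

theorem Q_eq_starProjection {m : MeasurableSpace Ω} [hm : Fact (m ≤ m0)] :
    Q μ m = (L2S μ m).starProjection := by
  simp only [Q, dif_pos hm.out]
  rfl

theorem norm_Q_le_one (m : MeasurableSpace Ω) : ‖Q μ m‖ ≤ 1 := by
  by_cases hm : m ≤ m0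
  · have : Fact (m ≤ m0) := ⟨hm⟩
    rw [Q_eq_starProjection]
    exact Submodule.starProjection_norm_le _
  · simp [Q, dif_neg hm]

theorem Q_comp_Q_eq_Q_inf {m1 m2 : MeasurableSpace Ω} (h1 : m1 ≤ m0) (h2 : InLam μ m2)
    (hc : (Q μ m1).comp (Q μ m2) = (Q μ m2).comp (Q μ m1)) :
    (Q μ m1).comp (Q μ m2) = Q μ (m1 ⊓ m2) := by
  have : Fact (m1 ≤ m0) := ⟨h1⟩
  have : Fact (m2 ≤ m0) := ⟨h2.1⟩
  have : Fact (m1 ⊓ m2 ≤ m0) := ⟨inf_le_left.trans h1⟩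
  rw [Q_eq_starProjection (m := m1), Q_eq_starProjection (m := m2),
    Q_eq_starProjection (m := m1 ⊓ m2)] at *
  exact Submodule.starProjection_comp_starProjection_eq_inf (L2S_inf h2.2) hc

theorem SOTLim.comp {x y : ℕ → MeasurableSpace Ω} {xl yl : MeasurableSpace Ω}
    (hlx : SOTLim μ x xl) (hly : SOTLim μ y yl) (f : Lp ℝ 2 μ) :
    Tendsto (fun n => Q μ (x n) (Q μ (y n) f)) atTop (𝓝 (Q μ xl (Q μ yl f))) :=
  (hly f).apply_of_norm_le hlx fun _ => norm_Q_le_one _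

end Lambda

theorem stmt10_general {m0 : MeasurableSpace Ω} (μ : Measure Ω)
    (x y : ℕ → MeasurableSpace Ω) (xl yl : MeasurableSpace Ω)
    (hx : ∀ n, InLam μ (x n)) (hy : ∀ n, InLam μ (y n))
    (hxl : InLam μ xl) (hyl : InLam μ yl)
    (hcomm : ∀ n, (Q μ (x n)).comp (Q μ (y n)) = (Q μ (y n)).comp (Q μ (x n)))
    (hlx : SOTLim μ x xl) (hly : SOTLim μ y yl) :
    (Q μ xl).comp (Q μ yl) = (Q μ yl).comp (Q μ xl) ∧
    SOTLim μ (fun n => x n ⊓ y n) (xl ⊓ yl) := by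
  have hlim : (Q μ xl).comp (Q μ yl) = (Q μ yl).comp (Q μ xl) := by
    ext1 f
    have hxy := hlx.comp hly f
    simp only [← ContinuousLinearMap.comp_apply, hcomm] at hxy
    exact tendsto_nhds_unique hxy (hly.comp hlx f)
  refine ⟨hlim, fun f => ?_⟩
  simp only [← Q_comp_Q_eq_Q_inf (hx _).1 (hy _) (hcomm _),
    ← Q_comp_Q_eq_Q_inf hxl.1 hyl hlim, ContinuousLinearMap.comp_apply]
  exact hlx.comp hly f

/-- If `Q_{x_n} → Q_x` and `Q_{y_n} → Q_y` strongly and for each `n` the projections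
`Q_{x_n}, Q_{y_n}` commute, then `Q_x, Q_y` commute and `Q_{x_n ∧ y_n} → Q_{x ∧ y}`
strongly. -/
theorem stmt10 {m0 : MeasurableSpace Ω} (μ : Measure Ω) [IsProbabilityMeasure μ]
    (x y : ℕ → MeasurableSpace Ω) (xl yl : MeasurableSpace Ω)
    (hx : ∀ n, InLam μ (x n)) (hy : ∀ n, InLam μ (y n))
    (hxl : InLam μ xl) (hyl : InLam μ yl)
    (hcomm : ∀ n, (Q μ (x n)).comp (Q μ (y n)) = (Q μ (y n)).comp (Q μ (x n)))
    (hlx : SOTLim μ x xl) (hly : SOTLim μ y yl) :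
    (Q μ xl).comp (Q μ yl) = (Q μ yl).comp (Q μ xl) ∧
    SOTLim μ (fun n => x n ⊓ y n) (xl ⊓ yl) :=
  stmt10_general (m0 := m0) μ x y xl yl hx hy hxl hyl hcomm hlx hly
end
end

section
/- Two sub-σ-fields x, y of a probability space are independent if and only if the conditional expectation projections Q_x, Q_y commute and x ∧ y is the trivial σ-field (equivalently, Q_x Q_y = Q_y Q_x = Q₀, the projection onto constants). -/
open MeasureTheory Filter Topology

set_option synthInstance.maxHeartbeats 400000
noncomputable section

variable {Ω : Type*}

/-- Independence of two sub-σ-fields. -/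
def IndepSF {m0 : MeasurableSpace Ω} (μ : Measure Ω) (x y : MeasurableSpace Ω) : Prop :=
  ∀ s t : Set Ω, MeasurableSet[x] s → MeasurableSet[y] t → μ (s ∩ t) = μ s * μ t

/-! Independence of `x` and `y` says exactly that `E[E[f | y] | x] = E f` for every `f`, i.e.
`Q_x Q_y = Q₀`; conversely, pairing `Q_x Q_y 1_t = Q₀ 1_t` with `1_s` gives `P(s ∩ t) = P(s) P(t)`.
When `Q_x` and `Q_y` commute, `Q_x Q_y` is the projection onto `L₂(x) ∩ L₂(y)`, which is
`L₂(x ∧ y)` because `y` contains the null sets, hence `Q₀` when `x ∧ y` is trivial. Finally, under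
independence every set of `x ∧ y` is independent of itself, so it has probability `0` or `1`. -/

open ProbabilityTheory
open scoped InnerProductSpace symmDiff

section Projection

variable {m m0 : MeasurableSpace Ω} {μ : Measure Ω}

lemma Q_apply (hm : m ≤ m0) (f : Lp ℝ 2 μ) : Q μ m f = (condExpL2 ℝ ℝ hm f : Lp ℝ 2 μ) := by
  simp only [Q, dif_pos hm]
  rfl

lemma Q_mem (hm : m ≤ m0) (f : Lp ℝ 2 μ) : Q μ m f ∈ L2S μ m := by
  rw [Q_apply hm]
  exact (condExpL2 ℝ ℝ hm f).2

lemma Q_eq_self (hm : m ≤ m0) {f : Lp ℝ 2 μ} (hf : f ∈ L2S μ m) : Q μ m f = f := by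
  have : Fact (m ≤ m0) := ⟨hm⟩
  rw [Q_apply hm]
  exact congrArg Subtype.val
    (Submodule.orthogonalProjectionOnto_mem_subspace_eq_self (K := L2S μ m) ⟨f, hf⟩)

lemma inner_Q_left (hm : m ≤ m0) (f g : Lp ℝ 2 μ) : ⟪Q μ m f, g⟫_ℝ = ⟪f, Q μ m g⟫_ℝ := by
  rw [Q_apply hm, Q_apply hm]
  exact inner_condExpL2_left_eq_right hm

lemma Q_eq_of_mem_of_inner_eq (hm : m ≤ m0) {f v : Lp ℝ 2 μ} (hv : v ∈ L2S μ m)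
    (h : ∀ w ∈ L2S μ m, ⟪v, w⟫_ℝ = ⟪f, w⟫_ℝ) : Q μ m f = v := by
  have : Fact (m ≤ m0) := ⟨hm⟩
  rw [Q_apply hm, condExpL2]
  exact (Submodule.eq_starProjection_of_mem_of_inner_eq_zero (u := f) hv fun w hw => by
    rw [inner_sub_left, h w hw, sub_self])

lemma L2S_mono {m' : MeasurableSpace Ω} (h : m ≤ m') : L2S μ m ≤ L2S μ m' := fun _ hf =>
  mem_lpMeas_iff_aestronglyMeasurable.mpr ((mem_lpMeas_iff_aestronglyMeasurable.mp hf).mono h)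

lemma Q_ae_eq_condExp [IsFiniteMeasure μ] (hm : m ≤ m0) (f : Lp ℝ 2 μ) :
    Q μ m f =ᵐ[μ] μ[f | m] := by
  rw [Q_apply hm]
  simpa only [Lp.toLp_coeFn] using (Lp.memLp f).condExpL2_ae_eq_condExp (𝕜 := ℝ) hm

lemma integral_Q [IsFiniteMeasure μ] (hm : m ≤ m0) (f : Lp ℝ 2 μ) :
    ∫ ω, Q μ m f ω ∂μ = ∫ ω, f ω ∂μ := by
  rw [integral_congr_ae (Q_ae_eq_condExp hm f), integral_condExp hm]

end Projection

section NullSF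

variable {m0 : MeasurableSpace Ω} {μ : Measure Ω}

lemma measurableSet_nullSF {s : Set Ω} (hs : μ s = 0) : MeasurableSet[nullSF μ] s :=
  MeasurableSpace.measurableSet_generateFrom hs

lemma measure_eq_zero_or_measure_compl_eq_zero {s : Set Ω} (hs : MeasurableSet[nullSF μ] s) :
    μ s = 0 ∨ μ sᶜ = 0 := by
  induction s, hs using MeasurableSpace.generateFrom_induction with
  | hC t ht _ => exact Or.inl ht
  | empty => exact Or.inl measure_empty
  | compl t _ h => rwa [compl_compl, or_comm]
  | iUnion f _ h =>
    by_cases hall : ∀ n, μ (f n) = 0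
    · exact Or.inl (measure_iUnion_null hall)
    · obtain ⟨n, hn⟩ := not_forall.mp hall
      exact Or.inr (measure_mono_null (Set.compl_subset_compl.mpr (Set.subset_iUnion f n))
        ((h n).resolve_left hn))

lemma indep_nullSF_right [IsProbabilityMeasure μ] (m : MeasurableSpace Ω) :
    Indep m (nullSF μ) μ := by
  rw [Indep_iff]
  intro s t _ ht
  rcases measure_eq_zero_or_measure_compl_eq_zero ht with h | h
  · rw [measure_mono_null Set.inter_subset_right h, h, mul_zero]
  · rw [measure_inter_conull h,
      (prob_compl_eq_zero_iff₀ (NullMeasurableSet.of_null h).of_compl).mp h, mul_one]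

lemma measurable_of_ae_eq {m : MeasurableSpace Ω} (hm : nullSF μ ≤ m) {β : Type*}
    [MeasurableSpace β] {f g : Ω → β} (hg : Measurable[m] g) (hfg : f =ᵐ[μ] g) :
    Measurable[m] f := by
  intro A hA
  have hnull : MeasurableSet[m] ((g ⁻¹' A) ∆ (f ⁻¹' A)) :=
    hm _ (measurableSet_nullSF (measure_symmDiff_eq_zero_iff.mpr (hfg.preimage A).symm))
  simpa only [symmDiff_symmDiff_cancel_left] using (hg hA).symmDiff hnull

lemma L2S_inf_le {x y : MeasurableSpace Ω} (hy : nullSF μ ≤ y) :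
    L2S μ x ⊓ L2S μ y ≤ L2S μ (x ⊓ y) := by
  rintro f ⟨hfx, hfy⟩
  obtain ⟨g, hgx, hfg⟩ := mem_lpMeas_iff_aestronglyMeasurable.mp hfx
  obtain ⟨g', hg'y, hfg'⟩ := mem_lpMeas_iff_aestronglyMeasurable.mp hfy
  have hgy : Measurable[y] g := measurable_of_ae_eq hy hg'y.measurable (hfg.symm.trans hfg')
  have hgxy : Measurable[x ⊓ y] g := fun A hA =>
    MeasurableSpace.measurableSet_inf.mpr ⟨hgx.measurable hA, hgy hA⟩
  exact mem_lpMeas_iff_aestronglyMeasurable.mpr ⟨g, hgxy.stronglyMeasurable, hfg⟩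

end NullSF

section Independence

variable {m0 : MeasurableSpace Ω} {μ : Measure Ω}

lemma indepSF_iff_indep {x y : MeasurableSpace Ω} : IndepSF μ x y ↔ Indep x y μ :=
  (Indep_iff x y μ).symm

lemma condExp_ae_eq_integral_of_indep [IsFiniteMeasure μ] {m₁ m₂ : MeasurableSpace Ω}
    (hle₁ : m₁ ≤ m0) (hle₂ : m₂ ≤ m0) {f : Ω → ℝ} (hf : AEStronglyMeasurable[m₁] f μ)
    (h : Indep m₁ m₂ μ) : μ[f | m₂] =ᵐ[μ] fun _ => ∫ ω, f ω ∂μ := by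
  obtain ⟨g, hg, hfg⟩ := hf
  rw [integral_congr_ae hfg]
  exact (condExp_congr_ae hfg).trans (condExp_indep_eq hle₁ hle₂ hg h)

lemma Q_nullSF_ae_eq [IsProbabilityMeasure μ] (h0 : nullSF μ ≤ m0) (f : Lp ℝ 2 μ) :
    Q μ (nullSF μ) f =ᵐ[μ] fun _ => ∫ ω, f ω ∂μ :=
  (Q_ae_eq_condExp h0 f).trans (condExp_indep_eq le_rfl h0 (Lp.stronglyMeasurable f)
    (indep_nullSF_right m0))

lemma Q_comp_Q_of_indep [IsProbabilityMeasure μ] {x y : MeasurableSpace Ω} (hx : x ≤ m0)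
    (hy : y ≤ m0) (h0 : nullSF μ ≤ m0) (h : Indep y x μ) :
    (Q μ x).comp (Q μ y) = Q μ (nullSF μ) := by
  refine ContinuousLinearMap.ext fun f => Lp.ext ?_
  have hQy : AEStronglyMeasurable[y] (Q μ y f) μ :=
    mem_lpMeas_iff_aestronglyMeasurable.mp (Q_mem hy f)
  calc ((Q μ x).comp (Q μ y) f : Ω → ℝ) =ᵐ[μ] μ[Q μ y f | x] := Q_ae_eq_condExp hx _
    _ =ᵐ[μ] fun _ => ∫ ω, Q μ y f ω ∂μ := condExp_ae_eq_integral_of_indep hy hx hQy h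
    _ = fun _ => ∫ ω, f ω ∂μ := by rw [integral_Q hy]
    _ =ᵐ[μ] Q μ (nullSF μ) f := (Q_nullSF_ae_eq h0 f).symm

lemma indep_of_Q_comp_Q [IsProbabilityMeasure μ] {x y : MeasurableSpace Ω} (hx : x ≤ m0)
    (hy : y ≤ m0) (h0 : nullSF μ ≤ m0) (h : (Q μ x).comp (Q μ y) = Q μ (nullSF μ)) :
    Indep x y μ := by
  rw [Indep_iff]
  intro s t hs ht
  set χs : Lp ℝ 2 μ := indicatorConstLp 2 (hx s hs) (measure_ne_top μ s) 1
  set χt : Lp ℝ 2 μ := indicatorConstLp 2 (hy t ht) (measure_ne_top μ t) 1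
  have hQχs : Q μ x χs = χs := Q_eq_self hx (mem_lpMeas_indicatorConstLp hx hs _)
  have hQχt : Q μ y χt = χt := Q_eq_self hy (mem_lpMeas_indicatorConstLp hy ht _)
  have key : μ.real (s ∩ t) = μ.real s * μ.real t :=
    calc μ.real (s ∩ t) = ⟪χs, (Q μ x).comp (Q μ y) χt⟫_ℝ := by
          rw [ContinuousLinearMap.comp_apply, hQχt, ← inner_Q_left hx, hQχs,
            L2.real_inner_indicatorConstLp_one_indicatorConstLp_one]
      _ = ∫ ω in s, Q μ (nullSF μ) χt ω ∂μ := by rw [h, L2.inner_indicatorConstLp_one]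
      _ = μ.real s * μ.real t := by
          rw [setIntegral_congr_ae (hx s hs) ((Q_nullSF_ae_eq h0 χt).mono fun _ h _ => h),
            setIntegral_const, integral_indicatorConstLp, smul_eq_mul, smul_eq_mul, mul_one]
  rw [← ENNReal.toReal_eq_toReal_iff' (measure_ne_top μ _) (by finiteness), ENNReal.toReal_mul]
  simpa only [measureReal_def] using key

lemma Q_comp_Q_of_commute_of_inf_eq [IsProbabilityMeasure μ] {x y : MeasurableSpace Ω}
    (hx : InLam μ x) (hy : InLam μ y)
    (hc : (Q μ x).comp (Q μ y) = (Q μ y).comp (Q μ x)) (hi : x ⊓ y = nullSF μ) :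
    (Q μ x).comp (Q μ y) = Q μ (nullSF μ) := by
  refine ContinuousLinearMap.ext fun f => (Q_eq_of_mem_of_inner_eq (hx.2.trans hx.1) ?_ ?_).symm
  · rw [← hi]
    refine L2S_inf_le hy.2 ⟨Q_mem hx.1 _, ?_⟩
    rw [hc]
    exact Q_mem hy.1 _
  · intro w hw
    rw [ContinuousLinearMap.comp_apply, inner_Q_left hx.1, Q_eq_self hx.1 (L2S_mono hx.2 hw),
      inner_Q_left hy.1, Q_eq_self hy.1 (L2S_mono hy.2 hw)]

lemma inf_eq_nullSF_of_indep [IsProbabilityMeasure μ] {x y : MeasurableSpace Ω} (hx : x ≤ m0)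
    (h0x : nullSF μ ≤ x) (h0y : nullSF μ ≤ y) (h : Indep x y μ) : x ⊓ y = nullSF μ := by
  refine le_antisymm (fun s hs => ?_) (le_inf h0x h0y)
  have hself : Indep (x ⊓ y) (x ⊓ y) μ :=
    indep_of_indep_of_le_right (indep_of_indep_of_le_left h inf_le_left) inf_le_right
  rcases measure_eq_zero_or_one_of_indep_self hself hs with h | h
  · exact measurableSet_nullSF h
  · have hsx : MeasurableSet[x] s := (MeasurableSpace.measurableSet_inf.mp hs).1
    simpa only [compl_compl] using
      (measurableSet_nullSF ((prob_compl_eq_zero_iff (hx s hsx)).mpr h)).compl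

end Independence

/-- Two sub-σ-fields `x, y` are independent iff the projections `Q_x, Q_y` commute and
`x ∧ y` is the trivial σ-field; equivalently, iff `Q_x Q_y = Q_y Q_x = Q₀`. -/
theorem stmt11 {m0 : MeasurableSpace Ω} (μ : Measure Ω) [IsProbabilityMeasure μ]
    (x y : MeasurableSpace Ω) (hx : InLam μ x) (hy : InLam μ y) :
    (IndepSF μ x y ↔
      ((Q μ x).comp (Q μ y) = (Q μ y).comp (Q μ x) ∧ x ⊓ y = nullSF μ)) ∧
    (IndepSF μ x y ↔
      ((Q μ x).comp (Q μ y) = Q μ (nullSF μ) ∧ (Q μ y).comp (Q μ x) = Q μ (nullSF μ))) := by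
  have h0 : nullSF μ ≤ m0 := hx.2.trans hx.1
  have hQxy : Indep x y μ → (Q μ x).comp (Q μ y) = Q μ (nullSF μ) := fun h =>
    Q_comp_Q_of_indep hx.1 hy.1 h0 h.symm
  have hQyx : Indep x y μ → (Q μ y).comp (Q μ x) = Q μ (nullSF μ) := fun h =>
    Q_comp_Q_of_indep hy.1 hx.1 h0 h
  rw [indepSF_iff_indep]
  refine ⟨⟨fun h => ⟨(hQxy h).trans (hQyx h).symm, inf_eq_nullSF_of_indep hx.1 hx.2 hy.2 h⟩,
    fun ⟨hc, hi⟩ => indep_of_Q_comp_Q hx.1 hy.1 h0 (Q_comp_Q_of_commute_of_inf_eq hx hy hc hi)⟩,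
    ⟨fun h => ⟨hQxy h, hQyx h⟩, fun ⟨h, _⟩ => indep_of_Q_comp_Q hx.1 hy.1 h0 h⟩⟩
end
end
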